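/- Let p_1,…,p_n be distinct primes with min_i p_i ≥ 32nm, let q = ∏ p_i, and let e'' ∈ (1/q)·(ℤ/qℤ) be such that, viewed as a real number in [0,1), e'' ≤ (min_i p_i)/(16qn). Then the normalized-CRT preimage φ̃^{-1}(e'') = ((q/p_1)e'', …, (q/p_n)e''), with each coordinate taken modulo 1 and viewed as a real number in [0,1), satisfies ‖φ̃^{-1}(e'')‖₁ ≤ 1/16. -/

import Mathlib

open scoped BigOperators

/-- No-wraparound bound: for distinct primes `p i ≥ 32nm` with `q = ∏ pᵢ`, and
`e'' = k/q ∈ [0,1)` with `e'' ≤ (minᵢ pᵢ)/(16qn)`, the normalized-CRT preimage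
`φ̃⁻¹(e'') = ((q/p₁)e'', …, (q/pₙ)e'')` taken modulo 1 satisfies `‖φ̃⁻¹(e'')‖₁ ≤ 1/16`. -/
theorem stmt18 (n m : ℕ) (hn : 0 < n) (hm : 0 < m)
    (p : Fin n → ℕ) (hp : ∀ i, Nat.Prime (p i)) (hdist : Function.Injective p)
    (hmin : ∀ i, 32 * n * m ≤ p i)
    (q : ℕ) (hq : q = ∏ i, p i)
    (k : ℕ) (hk : k < q)
    (he : (k : ℝ) / q ≤
      ((Finset.univ.inf' (Finset.univ_nonempty_iff.mpr ⟨⟨0, hn⟩⟩) p : ℕ) : ℝ) /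
        (16 * q * n)) :
    (∑ i, Int.fract (((q / p i : ℕ) : ℝ) * ((k : ℝ) / q))) ≤ 1 / 16 := by
  have hne : (Finset.univ : Finset (Fin n)).Nonempty := Finset.univ_nonempty_iff.mpr ⟨⟨0, hn⟩⟩
  set μ : ℕ := Finset.univ.inf' hne p with hμ
  have hqpos : 0 < q := by
    rw [hq]; exact Finset.prod_pos fun i _ => (hp i).pos
  have hqr : (0 : ℝ) < q := by exact_mod_cast hqpos
  have hnr : (0 : ℝ) < n := by exact_mod_cast hn
  -- k ≤ μ / (16 n)
  have hk' : (k : ℝ) ≤ (μ : ℝ) / (16 * n) := by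
    have := mul_le_mul_of_nonneg_left he (le_of_lt hqr)
    rw [mul_div_cancel₀ _ (ne_of_gt hqr)] at this
    calc (k : ℝ) = q * ((k : ℝ) / q) := by field_simp
    _ ≤ q * ((μ : ℝ) / (16 * q * n)) := by rw [mul_div_cancel₀ _ (ne_of_gt hqr)]; exact this
    _ = (μ : ℝ) / (16 * n) := by field_simp
  have key : ∀ i, Int.fract (((q / p i : ℕ) : ℝ) * ((k : ℝ) / q)) ≤ 1 / (16 * n) := by
    intro i
    have hpdvd : p i ∣ q := by rw [hq]; exact Finset.dvd_prod_of_mem p (Finset.mem_univ i)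
    have hppos : (0 : ℝ) < p i := by exact_mod_cast (hp i).pos
    have hcast : ((q / p i : ℕ) : ℝ) = (q : ℝ) / p i := by
      exact Nat.cast_div hpdvd (by exact_mod_cast (hp i).pos.ne')
    have heq : ((q / p i : ℕ) : ℝ) * ((k : ℝ) / q) = (k : ℝ) / p i := by
      rw [hcast]; field_simp
    have hμle : (μ : ℝ) ≤ p i := by
      exact_mod_cast Finset.inf'_le p (Finset.mem_univ i)
    have hlt1 : (k : ℝ) / p i < 1 := by
      rw [div_lt_one hppos]
      calc (k : ℝ) ≤ (μ : ℝ) / (16 * n) := hk'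
      _ ≤ (p i : ℝ) / (16 * n) := by
          apply div_le_div_of_nonneg_right hμle (by positivity) |>.trans_eq rfl
      _ < p i := by
          rw [div_lt_iff₀ (by positivity)]
          nlinarith [hppos, show (1:ℝ) ≤ n from by exact_mod_cast hn]
    have hfr : Int.fract ((k : ℝ) / p i) = (k : ℝ) / p i :=
      Int.fract_eq_self.mpr ⟨by positivity, hlt1⟩
    rw [heq, hfr]
    rw [div_le_div_iff₀ hppos (by positivity)]
    calc (k : ℝ) * (16 * n) ≤ ((μ : ℝ) / (16 * n)) * (16 * n) := by
          apply mul_le_mul_of_nonneg_right hk' (by positivity)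
    _ = μ := by field_simp
    _ ≤ p i := hμle
    _ = 1 * p i := (one_mul _).symm
  calc (∑ i, Int.fract (((q / p i : ℕ) : ℝ) * ((k : ℝ) / q)))
      ≤ ∑ _i : Fin n, 1 / (16 * (n : ℝ)) := Finset.sum_le_sum fun i _ => key i
    _ = n * (1 / (16 * n)) := by rw [Finset.sum_const]; simp [mul_comm]
    _ = 1 / 16 := by field_simp
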